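/- For λ = 0.99 and μ = 4.5, one has a(0.99, 4.5)² < 4·b(0.99, 4.5) and b(0.99, 4.5) < 1, so the Jacobian of Φ_{0.99,4.5} at its interior fixed point p* has non-real complex conjugate eigenvalues of modulus strictly less than 1 (p* is a spiral sink). For λ = 0.99 and μ = 4.55, one has a(0.99, 4.55)² < 4·b(0.99, 4.55) and b(0.99, 4.55) > 1, so the Jacobian of Φ_{0.99,4.55} at p* has non-real complex conjugate eigenvalues of modulus strictly greater than 1 (p* is a spiral source). -/

import Mathlib

noncomputable section

/-- The planar R-S flip-flop model map `Φ_{λ,μ}(x,y) = (1 − x(λ(1−x) + y), μy(x − y))`. -/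
def Phi (l m : ℝ) (p : ℝ × ℝ) : ℝ × ℝ :=
  (1 - p.1 * (l * (1 - p.1) + p.2), m * p.2 * (p.1 - p.2))

/-- `x*` coordinate of the interior fixed point. -/
def xstar (l m : ℝ) : ℝ :=
  ((m⁻¹ - l - 1) + Real.sqrt ((1 + l - m⁻¹) ^ 2 + 4 * (1 - l))) / (2 * (1 - l))

/-- `y*` coordinate of the interior fixed point. -/
def ystar (l m : ℝ) : ℝ := xstar l m - 1 / m

/-- `a(λ,μ)`, the trace of the Jacobian of Φ at p*. -/
def adef (l m : ℝ) : ℝ := (2 * l - m - 1) * xstar l m + (2 - l + m⁻¹)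

/-- `b(λ,μ)`, the determinant of the Jacobian of Φ at p*. -/
def bdef (l m : ℝ) : ℝ :=
  m * ((l * (4 * m⁻¹ - 1) - 2 * (1 + m⁻¹)) * xstar l m + 2 * (1 - m⁻¹ * (l - m⁻¹)))

/-- The Jacobian matrix of Φ_{λ,μ} at the interior fixed point p*. -/
def Jp (l m : ℝ) : Matrix (Fin 2) (Fin 2) ℝ :=
  !![l * (2 * xstar l m - 1) - ystar l m, -(xstar l m);
     m * ystar l m, m * (xstar l m - 2 * ystar l m)]

/-- The root `σ = (a + i√(4b − a²))/2` of `σ² − aσ + b = 0` (for `a² < 4b`). -/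
def sigmaRoot (l m : ℝ) : ℂ :=
  ((adef l m : ℂ) + Complex.I * Real.sqrt (4 * bdef l m - (adef l m) ^ 2)) / 2

/-!
The trace of the Jacobian at `p*` is `a` identically, and its determinant is `b` because `x*` is
the positive root of `(1 − λ)x² + (1 + λ − μ⁻¹)x − 1`, which is what the fixed-point equations
reduce to. A real `2 × 2` matrix whose discriminant `tr² − 4 det` is negative has the conjugate
eigenvalues `(tr ± i√(4 det − tr²))/2`, of modulus `√det`. Since `a` and `b` are affine in `x*`, the
inequalities at the two parameter values only need `x*` in a short rational interval, and the
endpoints of that interval are certified by the sign of the quadratic there.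
-/

open Complex ComplexConjugate Matrix

lemma quadratic_neg_iff_lt_root {A B t : ℝ} (hA : 0 < A) (ht : 0 ≤ t) :
    A * t ^ 2 + B * t - 1 < 0 ↔ t < (-B + √(B ^ 2 + 4 * A)) / (2 * A) := by
  set s := √(B ^ 2 + 4 * A)
  have hs2 : s ^ 2 = B ^ 2 + 4 * A := Real.sq_sqrt (by positivity)
  have hBs : |B| < s := by
    rw [← Real.sqrt_sq_eq_abs]
    exact Real.sqrt_lt_sqrt (sq_nonneg B) (by linarith)
  have hfactor :
      4 * A * (A * t ^ 2 + B * t - 1) = (2 * A * t + B - s) * (2 * A * t + B + s) := by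
    linear_combination hs2
  have hplus : 0 < 2 * A * t + B + s := by nlinarith [neg_abs_le B]
  rw [lt_div_iff₀ (by positivity)]
  constructor
  · intro h
    nlinarith
  · intro h
    nlinarith

lemma quadratic_root_eq {A B : ℝ} (hA : A ≠ 0) (hD : 0 ≤ B ^ 2 + 4 * A) :
    A * ((-B + √(B ^ 2 + 4 * A)) / (2 * A)) ^ 2 + B * ((-B + √(B ^ 2 + 4 * A)) / (2 * A)) - 1
      = 0 := by
  set s := √(B ^ 2 + 4 * A)
  have hs2 : s ^ 2 = B ^ 2 + 4 * A := Real.sq_sqrt hD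
  field_simp
  linear_combination hs2

def quadRoot (A B : ℝ) : ℂ := (A + I * √(4 * B - A ^ 2)) / 2

section quadRoot

variable {A B : ℝ}

lemma quadRoot_re (A B : ℝ) : (quadRoot A B).re = A / 2 := by
  simp [quadRoot]

lemma quadRoot_im (A B : ℝ) : (quadRoot A B).im = √(4 * B - A ^ 2) / 2 := by
  simp [quadRoot]

lemma quadRoot_im_pos (h : A ^ 2 < 4 * B) : 0 < (quadRoot A B).im := by
  rw [quadRoot_im]
  exact half_pos (Real.sqrt_pos.2 (by linarith))

lemma norm_quadRoot_sq (h : A ^ 2 ≤ 4 * B) : ‖quadRoot A B‖ ^ 2 = B := by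
  rw [Complex.sq_norm, Complex.normSq_apply, quadRoot_re, quadRoot_im]
  nlinarith [Real.sq_sqrt (show 0 ≤ 4 * B - A ^ 2 by linarith)]

lemma quadRoot_isRoot (h : A ^ 2 ≤ 4 * B) : quadRoot A B ^ 2 - A * quadRoot A B + B = 0 := by
  have hs : ((√(4 * B - A ^ 2) : ℝ) : ℂ) ^ 2 = 4 * B - A ^ 2 := by
    exact_mod_cast Real.sq_sqrt (show 0 ≤ 4 * B - A ^ 2 by linarith)
  rw [quadRoot]
  linear_combination (-1 / 4 : ℂ) * hs + ((√(4 * B - A ^ 2) : ℂ) ^ 2 / 4) * I_sq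

lemma conj_quadRoot_isRoot (h : A ^ 2 ≤ 4 * B) :
    conj (quadRoot A B) ^ 2 - A * conj (quadRoot A B) + B = 0 := by
  simpa using congrArg conj (quadRoot_isRoot h)

end quadRoot

lemma det_smul_one_sub_fin_two {R : Type*} [CommRing R] (N : Matrix (Fin 2) (Fin 2) R) (z : R) :
    (z • (1 : Matrix (Fin 2) (Fin 2) R) - N).det = z ^ 2 - N.trace * z + N.det := by
  simp only [det_fin_two, trace_fin_two, Matrix.sub_apply, Matrix.smul_apply, one_apply_eq,
    one_apply_ne zero_ne_one, one_apply_ne one_ne_zero, smul_eq_mul, mul_one, mul_zero]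
  ring

lemma det_smul_one_sub_map_ofReal (M : Matrix (Fin 2) (Fin 2) ℝ) (z : ℂ) :
    (z • (1 : Matrix (Fin 2) (Fin 2) ℂ) - M.map ofReal).det = z ^ 2 - M.trace * z + M.det := by
  have htr : (M.map ofReal).trace = M.trace := (AddMonoidHom.map_trace ofRealHom M).symm
  have hdet : (M.map ofReal).det = M.det := (ofRealHom.map_det M).symm
  rw [det_smul_one_sub_fin_two, htr, hdet]

lemma det_quadRoot_smul_one_sub_eq_zero {M : Matrix (Fin 2) (Fin 2) ℝ}
    (h : M.trace ^ 2 ≤ 4 * M.det) :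
    (quadRoot M.trace M.det • (1 : Matrix (Fin 2) (Fin 2) ℂ) - M.map ofReal).det = 0 ∧
      (conj (quadRoot M.trace M.det) • (1 : Matrix (Fin 2) (Fin 2) ℂ) - M.map ofReal).det
        = 0 := by
  rw [det_smul_one_sub_map_ofReal, det_smul_one_sub_map_ofReal]
  exact ⟨quadRoot_isRoot h, conj_quadRoot_isRoot h⟩

section FixedPoint

variable {l m : ℝ}

lemma sigmaRoot_eq_quadRoot (l m : ℝ) : sigmaRoot l m = quadRoot (adef l m) (bdef l m) := rfl

lemma xstar_eq_root (l m : ℝ) :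
    xstar l m = (-(1 + l - m⁻¹) + √((1 + l - m⁻¹) ^ 2 + 4 * (1 - l))) / (2 * (1 - l)) := by
  unfold xstar
  congr 1
  ring

lemma xstar_isRoot (hl : l < 1) :
    (1 - l) * xstar l m ^ 2 + (1 + l - m⁻¹) * xstar l m - 1 = 0 := by
  rw [xstar_eq_root]
  exact quadratic_root_eq (by linarith) (by nlinarith [sq_nonneg (1 + l - m⁻¹)])

lemma lt_xstar_iff {t : ℝ} (hl : l < 1) (ht : 0 ≤ t) :
    t < xstar l m ↔ (1 - l) * t ^ 2 + (1 + l - m⁻¹) * t - 1 < 0 := by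
  rw [xstar_eq_root]
  exact (quadratic_neg_iff_lt_root (by linarith) ht).symm

lemma xstar_le_iff {t : ℝ} (hl : l < 1) (ht : 0 ≤ t) :
    xstar l m ≤ t ↔ 0 ≤ (1 - l) * t ^ 2 + (1 + l - m⁻¹) * t - 1 := by
  simpa only [not_lt] using (lt_xstar_iff hl ht).not

lemma trace_Jp (hm : m ≠ 0) : (Jp l m).trace = adef l m := by
  simp only [trace_fin_two, Jp, adef, ystar, one_div, of_apply, cons_val', cons_val_zero,
    cons_val_one, cons_val_fin_one]
  field_simp
  ring

lemma det_Jp (hl : l < 1) (hm : m ≠ 0) : (Jp l m).det = bdef l m := by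
  have hx := xstar_isRoot (m := m) hl
  simp only [det_fin_two, Jp, bdef, ystar, one_div, of_apply, cons_val', cons_val_zero,
    cons_val_one, cons_val_fin_one]
  field_simp at hx ⊢
  linear_combination (2 * m) * hx

lemma Jp_complex_eigenvalues (hl : l < 1) (hm : m ≠ 0) (h : adef l m ^ 2 < 4 * bdef l m) :
    (sigmaRoot l m).im ≠ 0 ∧
      (sigmaRoot l m • (1 : Matrix (Fin 2) (Fin 2) ℂ) - (Jp l m).map ofReal).det = 0 ∧
      (conj (sigmaRoot l m) • (1 : Matrix (Fin 2) (Fin 2) ℂ) - (Jp l m).map ofReal).det = 0 ∧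
      ‖sigmaRoot l m‖ ^ 2 = bdef l m := by
  rw [sigmaRoot_eq_quadRoot]
  rw [← trace_Jp hm, ← det_Jp hl hm] at h ⊢
  have hroots := det_quadRoot_smul_one_sub_eq_zero h.le
  exact ⟨(quadRoot_im_pos h).ne', hroots.1, hroots.2, norm_quadRoot_sq h.le⟩

end FixedPoint

lemma sink_inequalities : adef 0.99 4.5 ^ 2 < 4 * bdef 0.99 4.5 ∧ bdef 0.99 4.5 < 1 := by
  have hlo : 0.563 < xstar 0.99 4.5 := (lt_xstar_iff (by norm_num) (by norm_num)).2 (by norm_num)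
  have hhi : xstar 0.99 4.5 ≤ 0.564 := (xstar_le_iff (by norm_num) (by norm_num)).2 (by norm_num)
  unfold adef bdef
  constructor <;> nlinarith

lemma source_inequalities : adef 0.99 4.55 ^ 2 < 4 * bdef 0.99 4.55 ∧ 1 < bdef 0.99 4.55 := by
  have hlo : 0.563 < xstar 0.99 4.55 := (lt_xstar_iff (by norm_num) (by norm_num)).2 (by norm_num)
  have hhi : xstar 0.99 4.55 ≤ 0.5632 :=
    (xstar_le_iff (by norm_num) (by norm_num)).2 (by norm_num)
  unfold adef bdef
  constructor <;> nlinarith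

/-- For λ = 0.99, μ = 4.5: a² < 4b and b < 1, so the Jacobian at p* has non-real
conjugate eigenvalues of modulus < 1 (spiral sink); for λ = 0.99, μ = 4.55: a² < 4b
and b > 1, so the eigenvalues are non-real conjugates of modulus > 1 (spiral source). -/
theorem stmt_17 :
    ((adef 0.99 4.5) ^ 2 < 4 * bdef 0.99 4.5 ∧ bdef 0.99 4.5 < 1 ∧
      (sigmaRoot 0.99 4.5).im ≠ 0 ∧
      Matrix.det ((sigmaRoot 0.99 4.5) • (1 : Matrix (Fin 2) (Fin 2) ℂ)
        - (Jp 0.99 4.5).map (Complex.ofReal)) = 0 ∧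
      Matrix.det ((starRingEnd ℂ (sigmaRoot 0.99 4.5)) • (1 : Matrix (Fin 2) (Fin 2) ℂ)
        - (Jp 0.99 4.5).map (Complex.ofReal)) = 0 ∧
      ‖sigmaRoot 0.99 4.5‖ < 1) ∧
    ((adef 0.99 4.55) ^ 2 < 4 * bdef 0.99 4.55 ∧ 1 < bdef 0.99 4.55 ∧
      (sigmaRoot 0.99 4.55).im ≠ 0 ∧
      Matrix.det ((sigmaRoot 0.99 4.55) • (1 : Matrix (Fin 2) (Fin 2) ℂ)
        - (Jp 0.99 4.55).map (Complex.ofReal)) = 0 ∧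
      Matrix.det ((starRingEnd ℂ (sigmaRoot 0.99 4.55)) • (1 : Matrix (Fin 2) (Fin 2) ℂ)
        - (Jp 0.99 4.55).map (Complex.ofReal)) = 0 ∧
      1 < ‖sigmaRoot 0.99 4.55‖) := by
  obtain ⟨hdisc₁, hb₁⟩ := sink_inequalities
  obtain ⟨him₁, hroot₁, hroot₁', hnorm₁⟩ :=
    Jp_complex_eigenvalues (l := 0.99) (m := 4.5) (by norm_num) (by norm_num) hdisc₁
  obtain ⟨hdisc₂, hb₂⟩ := source_inequalities
  obtain ⟨him₂, hroot₂, hroot₂', hnorm₂⟩ :=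
    Jp_complex_eigenvalues (l := 0.99) (m := 4.55) (by norm_num) (by norm_num) hdisc₂
  exact ⟨⟨hdisc₁, hb₁, him₁, hroot₁, hroot₁', (sq_lt_one_iff₀ (norm_nonneg _)).1 (hnorm₁ ▸ hb₁)⟩,
    ⟨hdisc₂, hb₂, him₂, hroot₂, hroot₂', (one_lt_sq_iff₀ (norm_nonneg _)).1 (hnorm₂ ▸ hb₂)⟩⟩
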